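/- Let r,s be nonzero complex numbers with r+s ≠ 0, V = C^{M|N}, and let P, Q be the projections onto S²V and ∧²V respectively along the direct sum decomposition V⊗V = S²V ⊕ ∧²V. Define R̂ = rP − sQ and R = c∘R̂ where c(v_i⊗v_j) = (−1)^{|i||j|} v_j⊗v_i is the graded permutation. Then R = (r Σ_{i≤M} + s Σ_{i>M}) E_{ii}⊗E_{ii} + (Σ_{i>j} + rs Σ_{i<j}) E_{ii}⊗E_{jj} + (r−s) Σ_{i<j} (−1)^{|i|} E_{ji}⊗E_{ij}, where E_{ij} is the matrix unit sending v_k to δ_{jk} v_i. -/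

import Mathlib

open Matrix
open scoped Kronecker

noncomputable section

/-- parity of an index: 0 if `i < M` (even), 1 otherwise (odd). -/
def par (M : ℕ) {n : ℕ} (i : Fin n) : ℕ := if (i : ℕ) < M then 0 else 1

/-- matrix unit `E_{ij}`. -/
def E {n : ℕ} (i j : Fin n) : Matrix (Fin n) (Fin n) ℂ := Matrix.single i j 1

/-- basis vector `v_i ⊗ v_j` of `V ⊗ V`. -/
def bas2 {n : ℕ} (i j : Fin n) : Fin n × Fin n → ℂ := fun p => if p = (i, j) then 1 else 0

/-- `S²V`. -/
def S2 (n M : ℕ) (s : ℂ) : Submodule ℂ (Fin n × Fin n → ℂ) :=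
  Submodule.span ℂ
    ({v | ∃ i : Fin n, (i : ℕ) < M ∧ v = bas2 i i} ∪
     {v | ∃ j k : Fin n, j < k ∧
        v = bas2 j k + ((-1 : ℂ) ^ (par M j * par M k) * s) • bas2 k j})

/-- `∧²V`. -/
def W2 (n M : ℕ) (r : ℂ) : Submodule ℂ (Fin n × Fin n → ℂ) :=
  Submodule.span ℂ
    ({v | ∃ i : Fin n, M ≤ (i : ℕ) ∧ v = bas2 i i} ∪
     {v | ∃ j k : Fin n, j < k ∧
        v = bas2 j k - ((-1 : ℂ) ^ (par M j * par M k) * r) • bas2 k j})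

/-- the graded permutation `c : v_i⊗v_j ↦ (−1)^{|i||j|} v_j⊗v_i`, as a matrix. -/
def cM (n M : ℕ) : Matrix (Fin n × Fin n) (Fin n × Fin n) ℂ :=
  fun p q => if p.1 = q.2 ∧ p.2 = q.1 then (-1 : ℂ) ^ (par M q.1 * par M q.2) else 0

/-- the Perk–Schultz matrix
`R = (rΣ_{i≤M}+sΣ_{i>M}) E_{ii}⊗E_{ii} + (Σ_{i>j}+rsΣ_{i<j}) E_{ii}⊗E_{jj}
 + (r−s)Σ_{i<j}(−1)^{|i|} E_{ji}⊗E_{ij}`. -/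
def PS (n M : ℕ) (r s : ℂ) : Matrix (Fin n × Fin n) (Fin n × Fin n) ℂ :=
  (∑ i : Fin n, (if (i : ℕ) < M then r else s) • (E i i ⊗ₖ E i i))
  + (∑ i : Fin n, ∑ j : Fin n, (if j < i then (1 : ℂ) else 0) • (E i i ⊗ₖ E j j))
  + (∑ i : Fin n, ∑ j : Fin n, (if i < j then r * s else 0) • (E i i ⊗ₖ E j j))
  + (∑ i : Fin n, ∑ j : Fin n,
      (if i < j then (r - s) * (-1 : ℂ) ^ (par M i) else 0) • (E j i ⊗ₖ E i j))

/-! `R̂ = rP − sQ` acts as `r` on `S²V` and as `−s` on `∧²V`, which fixes `R̂ (v_i ⊗ v_i)` at once.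
For `j < k` and `ε = (−1)^{|j||k|}`, the vectors `x = v_j⊗v_k + εs v_k⊗v_j ∈ S²V` and
`y = v_j⊗v_k − εr v_k⊗v_j ∈ ∧²V` satisfy `x − y = ε(r+s) v_k⊗v_j`; since `r + s ≠ 0` this gives
`R̂ (v_k⊗v_j) = ε v_j⊗v_k` and then `R̂ (v_j⊗v_k) = (r−s) v_j⊗v_k + εrs v_k⊗v_j`. Applying `c` and
using `ε = (−1)^{|j|}` (an odd `j` forces an odd `k`), every column of `c ∘ R̂` matches the
corresponding column of the Perk–Schultz matrix. -/

section
variable {n : ℕ}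

lemma bas2_eq_single (i j : Fin n) : bas2 i j = Pi.single (i, j) 1 := by
  funext p; simp [bas2, Pi.single_apply]

lemma kronecker_E_mulVec_bas2 (i j k l a b : Fin n) :
    (E i j ⊗ₖ E k l) *ᵥ bas2 a b = if j = a ∧ l = b then bas2 i k else 0 := by
  rw [E, E, single_kronecker_single, bas2_eq_single, bas2_eq_single, single_mulVec_eq]
  by_cases h : j = a ∧ l = b <;> simp [h, Prod.ext_iff]

lemma PS_mulVec_bas2 (M : ℕ) (r s : ℂ) (a b : Fin n) : PS n M r s *ᵥ bas2 a b =
    (if a = b then (if (a : ℕ) < M then r else s) • bas2 a a else 0)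
      + (if b < a then bas2 a b else 0) + (if a < b then (r * s) • bas2 a b else 0)
      + (if a < b then ((r - s) * (-1) ^ par M a) • bas2 b a else 0) := by
  simp only [PS, add_mulVec, sum_mulVec, smul_mulVec, kronecker_E_mulVec_bas2, smul_ite, smul_zero,
    ite_and, Finset.sum_ite_eq', Finset.mem_univ, if_true]
  by_cases h : a = b
  · subst h; simp
  · simp [h]

lemma PS_mulVec_bas2_self (M : ℕ) (r s : ℂ) (a : Fin n) :
    PS n M r s *ᵥ bas2 a a = (if (a : ℕ) < M then r else s) • bas2 a a := by
  simp [PS_mulVec_bas2]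

lemma PS_mulVec_bas2_of_lt (M : ℕ) (r s : ℂ) {a b : Fin n} (h : a < b) :
    PS n M r s *ᵥ bas2 a b = (r * s) • bas2 a b + ((r - s) * (-1) ^ par M a) • bas2 b a := by
  simp [PS_mulVec_bas2, h, h.ne, h.not_gt]

lemma PS_mulVec_bas2_of_gt (M : ℕ) (r s : ℂ) {a b : Fin n} (h : b < a) :
    PS n M r s *ᵥ bas2 a b = bas2 a b := by
  simp [PS_mulVec_bas2, h, h.ne', h.not_gt]

lemma cM_mulVec_bas2 (M : ℕ) (i j : Fin n) :
    cM n M *ᵥ bas2 i j = (-1 : ℂ) ^ (par M i * par M j) • bas2 j i := by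
  rw [bas2_eq_single, mulVec_single_one, bas2_eq_single]
  funext p
  simp [cM, Pi.single_apply, Prod.ext_iff]

lemma neg_one_pow_par_mul_of_lt (M : ℕ) {a b : Fin n} (h : a < b) :
    (-1 : ℂ) ^ (par M a * par M b) = (-1) ^ par M a := by
  unfold par
  split_ifs with ha hb hb <;> first | rfl | simp
  omega

end

section
variable {n M : ℕ} {r s : ℂ} {A : Matrix (Fin n × Fin n) (Fin n × Fin n) ℂ}

lemma mulVec_bas2_self (hS : ∀ v ∈ S2 n M s, A *ᵥ v = r • v)
    (hW : ∀ v ∈ W2 n M r, A *ᵥ v = (-s) • v) (i : Fin n) :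
    A *ᵥ bas2 i i = (if (i : ℕ) < M then r else -s) • bas2 i i := by
  by_cases hi : (i : ℕ) < M
  · rw [if_pos hi, hS _ (Submodule.subset_span (Or.inl ⟨i, hi, rfl⟩))]
  · rw [if_neg hi, hW _ (Submodule.subset_span (Or.inl ⟨i, not_lt.mp hi, rfl⟩))]

lemma mulVec_bas2_of_gt (hrs : r + s ≠ 0) (hS : ∀ v ∈ S2 n M s, A *ᵥ v = r • v)
    (hW : ∀ v ∈ W2 n M r, A *ᵥ v = (-s) • v) {j k : Fin n} (hjk : j < k) :
    A *ᵥ bas2 k j = (-1 : ℂ) ^ (par M j * par M k) • bas2 j k := by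
  set ε : ℂ := (-1) ^ (par M j * par M k)
  have hε : ε * ε = 1 := by rw [← mul_pow]; simp
  have hx := hS _ (Submodule.subset_span (Or.inr ⟨j, k, hjk, rfl⟩))
  have hy := hW _ (Submodule.subset_span (Or.inr ⟨j, k, hjk, rfl⟩))
  rw [mulVec_add, mulVec_smul] at hx
  rw [mulVec_sub, mulVec_smul] at hy
  apply smul_right_injective _ hrs
  linear_combination (norm := module) ε • (hx - hy) - hε • ((r + s) • A *ᵥ bas2 k j)

lemma mulVec_bas2_of_lt (hrs : r + s ≠ 0) (hS : ∀ v ∈ S2 n M s, A *ᵥ v = r • v)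
    (hW : ∀ v ∈ W2 n M r, A *ᵥ v = (-s) • v) {j k : Fin n} (hjk : j < k) :
    A *ᵥ bas2 j k =
      (r - s) • bas2 j k + ((-1 : ℂ) ^ (par M j * par M k) * (r * s)) • bas2 k j := by
  set ε : ℂ := (-1) ^ (par M j * par M k)
  have hε : ε * ε = 1 := by rw [← mul_pow]; simp
  have hx := hS _ (Submodule.subset_span (Or.inr ⟨j, k, hjk, rfl⟩))
  rw [mulVec_add, mulVec_smul, mulVec_bas2_of_gt hrs hS hW hjk] at hx
  linear_combination (norm := module) hx - hε • (s • bas2 j k)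

end

theorem stmt1_general (M N : ℕ) (r s : ℂ) (hrs : r + s ≠ 0)
    (P Q : Matrix (Fin (M + N) × Fin (M + N)) (Fin (M + N) × Fin (M + N)) ℂ)
    (hP1 : ∀ v ∈ S2 (M + N) M s, P.mulVec v = v)
    (hP2 : ∀ v ∈ W2 (M + N) M r, P.mulVec v = 0)
    (hQ1 : ∀ v ∈ S2 (M + N) M s, Q.mulVec v = 0)
    (hQ2 : ∀ v ∈ W2 (M + N) M r, Q.mulVec v = v) :
    cM (M + N) M * (r • P - s • Q) = PS (M + N) M r s := by
  have hS : ∀ v ∈ S2 (M + N) M s, (r • P - s • Q) *ᵥ v = r • v := fun v hv => by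
    rw [sub_mulVec, smul_mulVec, smul_mulVec, hP1 v hv, hQ1 v hv, smul_zero, sub_zero]
  have hW : ∀ v ∈ W2 (M + N) M r, (r • P - s • Q) *ᵥ v = (-s) • v := fun v hv => by
    rw [sub_mulVec, smul_mulVec, smul_mulVec, hP2 v hv, hQ2 v hv, smul_zero, zero_sub, neg_smul]
  refine ext_of_mulVec_single fun ⟨a, b⟩ => ?_
  rw [← bas2_eq_single, ← mulVec_mulVec]
  rcases lt_trichotomy a b with hab | rfl | hab
  · rw [mulVec_bas2_of_lt hrs hS hW hab, mulVec_add, mulVec_smul, mulVec_smul, cM_mulVec_bas2,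
      cM_mulVec_bas2, PS_mulVec_bas2_of_lt _ _ _ hab, mul_comm (par M b),
      neg_one_pow_par_mul_of_lt M hab]
    have hε : ((-1 : ℂ) ^ par M a) * (-1) ^ par M a = 1 := by rw [← mul_pow]; simp
    linear_combination (norm := module) hε • ((r * s) • bas2 a b)
  · rw [mulVec_bas2_self hS hW, mulVec_smul, cM_mulVec_bas2, PS_mulVec_bas2_self, smul_smul]
    unfold par
    split_ifs <;> simp
  · rw [mulVec_bas2_of_gt hrs hS hW hab, mulVec_smul, cM_mulVec_bas2,
      PS_mulVec_bas2_of_gt _ _ _ hab, smul_smul, ← mul_pow]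
    simp

/-- with `P`, `Q` the projections onto `S²V` and `∧²V` along the
decomposition `V⊗V = S²V ⊕ ∧²V`, and `R̂ = rP − sQ`, the matrix `R = c∘R̂` is given
by the explicit Perk–Schultz formula. -/
theorem stmt1 (M N : ℕ) (r s : ℂ) (hr : r ≠ 0) (hs : s ≠ 0) (hrs : r + s ≠ 0)
    (P Q : Matrix (Fin (M + N) × Fin (M + N)) (Fin (M + N) × Fin (M + N)) ℂ)
    (hP1 : ∀ v ∈ S2 (M + N) M s, P.mulVec v = v)
    (hP2 : ∀ v ∈ W2 (M + N) M r, P.mulVec v = 0)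
    (hQ1 : ∀ v ∈ S2 (M + N) M s, Q.mulVec v = 0)
    (hQ2 : ∀ v ∈ W2 (M + N) M r, Q.mulVec v = v) :
    cM (M + N) M * (r • P - s • Q) = PS (M + N) M r s :=
  stmt1_general M N r s hrs P Q hP1 hP2 hQ1 hQ2

end
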